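/- arXiv:2003.00473 — 2 statements merged into one kernel-verified Lean document; each statement's English description precedes it below -/
import Mathlib

section
/- If the set waiting(s) of suspended process indices does not contain all of {1,…,n}, then the recursively defined scheduler value xsched_n(h, s, 0) is defined (the recursion terminates with a result); conversely, if waiting(s) ⊇ {1,…,n} then xsched_n(h, s, 0) is undefined. -/
/-- The recursively defined partial scheduler: starting from index `i`, it
returns the first value `nxt i'` (for `i ≤ i' < k·n`) that is not waiting, and
is undefined (`none`) if all candidate indices are exhausted.
Here `nxt : ℕ → ℕ` abstracts `next_n(h, ·)` for the fixed history `h`, and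
`waiting : ℕ → Prop` abstracts the set of suspended processes in state `s`. -/
def xsched (k n : ℕ+) (waiting : ℕ → Prop) [DecidablePred waiting]
    (nxt : ℕ → ℕ) (i : ℕ) : Option ℕ :=
  if _ : i < (k : ℕ) * (n : ℕ) then
    if waiting (nxt i) then xsched k n waiting nxt (i + 1) else some (nxt i)
  else none
termination_by (k : ℕ) * (n : ℕ) - i

lemma xsched_some (k n : ℕ+) (waiting : ℕ → Prop) [DecidablePred waiting]
    (nxt : ℕ → ℕ) : ∀ i, (∃ j, i ≤ j ∧ j < (k:ℕ)*(n:ℕ) ∧ ¬ waiting (nxt j)) →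
    (xsched k n waiting nxt i).isSome := by
  intro i
  induction' hd : (k:ℕ)*(n:ℕ) - i using Nat.strong_induction_on with d ih generalizing i
  rintro ⟨j, hij, hjkn, hw⟩
  rw [xsched]
  have hi : i < (k:ℕ)*(n:ℕ) := lt_of_le_of_lt hij hjkn
  rw [dif_pos hi]
  by_cases h : waiting (nxt i)
  · rw [if_pos h]
    have hij' : i ≠ j := by rintro rfl; exact hw h
    exact ih ((k:ℕ)*(n:ℕ) - (i+1)) (by omega) (i+1) (by omega)
      ⟨j, by omega, hjkn, hw⟩
  · rw [if_neg h]; rfl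

lemma xsched_none (k n : ℕ+) (waiting : ℕ → Prop) [DecidablePred waiting]
    (nxt : ℕ → ℕ) : ∀ i, (∀ j, i ≤ j → j < (k:ℕ)*(n:ℕ) → waiting (nxt j)) →
    xsched k n waiting nxt i = none := by
  intro i
  induction' hd : (k:ℕ)*(n:ℕ) - i using Nat.strong_induction_on with d ih generalizing i
  intro hall
  rw [xsched]
  by_cases hi : i < (k:ℕ)*(n:ℕ)
  · rw [dif_pos hi, if_pos (hall i le_rfl hi)]
    exact ih ((k:ℕ)*(n:ℕ) - (i+1)) (by omega) (i+1) (by omega)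
      fun j hj hj' => hall j (by omega) hj'
  · rw [dif_neg hi]

/-- If the waiting set does not contain all of `{1,…,n}`, then the scheduler
value `xsched k n waiting nxt 0` is defined; conversely, if the waiting set
contains all of `{1,…,n}` then it is undefined.  For the forward direction we
assume the round-robin coverage property: among any `k·n` consecutive indices,
the values of `nxt` include every element of `{1,…,n}`.  For the converse we
assume `nxt` always takes values in `{1,…,n}`. -/
theorem xsched_defined_iff (k n : ℕ+) (waiting : ℕ → Prop)
    [DecidablePred waiting] (nxt : ℕ → ℕ)
    (hrange : ∀ i, 1 ≤ nxt i ∧ nxt i ≤ (n : ℕ))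
    (hcover : ∀ a : ℕ, ∀ m : ℕ, 1 ≤ m → m ≤ (n : ℕ) →
      ∃ i, a ≤ i ∧ i < a + (k : ℕ) * (n : ℕ) ∧ nxt i = m) :
    ((∃ m : ℕ, 1 ≤ m ∧ m ≤ (n : ℕ) ∧ ¬ waiting m) →
        (xsched k n waiting nxt 0).isSome)
    ∧ ((∀ m : ℕ, 1 ≤ m → m ≤ (n : ℕ) → waiting m) →
        xsched k n waiting nxt 0 = none) := by
  constructor
  · rintro ⟨m, hm1, hmn, hw⟩
    obtain ⟨i, _, hi, hm⟩ := hcover 0 m hm1 hmn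
    exact xsched_some k n waiting nxt 0 ⟨i, Nat.zero_le _, by omega, hm ▸ hw⟩
  · intro hall
    exact xsched_none k n waiting nxt 0 fun j _ _ =>
      hall (nxt j) (hrange j).1 (hrange j).2
end

section
/- In ACPε, for every closed term t, the equation ε ∥ t = t is derivable from the axioms. (Equivalently, in the initial model of ACPε, ε is a unit for parallel composition.) -/
/-- Closed terms of ACPε over a set of actions `A`. -/
inductive T (A : Type*) : Type _
  | delta : T A                 -- inaction δ
  | eps : T A                   -- empty process ε
  | act : A → T A               -- action constants
  | alt : T A → T A → T A       -- alternative composition +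
  | seq : T A → T A → T A       -- sequential composition ·
  | par : T A → T A → T A       -- merge ∥
  | lm : T A → T A → T A        -- left merge ⌊
  | cm : T A → T A → T A        -- communication merge |
  | encap : Set A → T A → T A   -- encapsulation ∂_H

namespace T

/-- Constants of ACPε that differ from ε: `none` stands for δ and `some a`
for the action constant `a`. -/
def actd {A : Type*} : Option A → T A
  | none => delta
  | some a => act a

/-- The communication function extended to `A ∪ {δ}` (encoded via `Option`):
`γδ(δ, -) = γδ(-, δ) = δ`. -/
def gammad {A : Type*} (γ : A → A → Option A) : Option A → Option A → Option A
  | some a, some b => γ a b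
  | _, _ => none

/-- Derivable equality in ACPε: equational logic over the axioms A1–A9,
CM1T–CM12 and D0–D4. -/
inductive deriv {A : Type*} (γ : A → A → Option A) : T A → T A → Prop
  -- equational logic
  | refl (x) : deriv γ x x
  | symm {x y} : deriv γ x y → deriv γ y x
  | trans {x y z} : deriv γ x y → deriv γ y z → deriv γ x z
  | alt_congr {x x' y y'} : deriv γ x x' → deriv γ y y' →
      deriv γ (alt x y) (alt x' y')
  | seq_congr {x x' y y'} : deriv γ x x' → deriv γ y y' →
      deriv γ (seq x y) (seq x' y')
  | par_congr {x x' y y'} : deriv γ x x' → deriv γ y y' →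
      deriv γ (par x y) (par x' y')
  | lm_congr {x x' y y'} : deriv γ x x' → deriv γ y y' →
      deriv γ (lm x y) (lm x' y')
  | cm_congr {x x' y y'} : deriv γ x x' → deriv γ y y' →
      deriv γ (cm x y) (cm x' y')
  | encap_congr (H) {x x'} : deriv γ x x' → deriv γ (encap H x) (encap H x')
  -- A1–A9
  | A1 (x y) : deriv γ (alt x y) (alt y x)
  | A2 (x y z) : deriv γ (alt (alt x y) z) (alt x (alt y z))
  | A3 (x) : deriv γ (alt x x) x
  | A4 (x y z) : deriv γ (seq (alt x y) z) (alt (seq x z) (seq y z))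
  | A5 (x y z) : deriv γ (seq (seq x y) z) (seq x (seq y z))
  | A6 (x) : deriv γ (alt x delta) x
  | A7 (x) : deriv γ (seq delta x) delta
  | A8 (x) : deriv γ (seq x eps) x
  | A9 (x) : deriv γ (seq eps x) x
  -- D0–D4 (in D1, D2, `a` ranges over constants different from ε, i.e. over
  -- actions and δ; for δ both sides are δ, so stating them for actions and
  -- adding ∂_H(δ) = δ is equivalent)
  | D0 (H) : deriv γ (encap H eps) eps
  | Dδ (H) : deriv γ (encap H delta) delta
  | D1 {H a} : a ∉ H → deriv γ (encap H (act a)) (act a)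
  | D2 {H a} : a ∈ H → deriv γ (encap H (act a)) delta
  | D3 (H x y) : deriv γ (encap H (alt x y)) (alt (encap H x) (encap H y))
  | D4 (H x y) : deriv γ (encap H (seq x y)) (seq (encap H x) (encap H y))
  -- CM1T–CM12 (∂_A is encapsulation w.r.t. the whole action set)
  | CM1T (x y) : deriv γ (par x y)
      (alt (alt (alt (lm x y) (lm y x)) (cm x y))
        (seq (encap Set.univ x) (encap Set.univ y)))
  | CM2T (x) : deriv γ (lm eps x) delta
  | CM3 (a : Option A) (x y) :
      deriv γ (lm (seq (actd a) x) y) (seq (actd a) (par x y))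
  | CM4 (x y z) : deriv γ (lm (alt x y) z) (alt (lm x z) (lm y z))
  | CM5T (x) : deriv γ (cm eps x) delta
  | CM6T (x) : deriv γ (cm x eps) delta
  | CM7 (a b : Option A) (x y) :
      deriv γ (cm (seq (actd a) x) (seq (actd b) y))
        (seq (actd (gammad γ a b)) (par x y))
  | CM8 (x y z) : deriv γ (cm (alt x y) z) (alt (cm x z) (cm y z))
  | CM9 (x y z) : deriv γ (cm x (alt y z)) (alt (cm x y) (cm x z))
  | CM10 (a b : Option A) : deriv γ (cm (actd a) (actd b)) (actd (gammad γ a b))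
  | CM11 (x) : deriv γ (cm delta x) delta
  | CM12 (x) : deriv γ (cm x delta) delta

end T

open T

namespace ACPaux

variable {A : Type*} {γ : A → A → Option A}

open T.deriv

/-- size measure for termination of normalization of merges -/
def size : T A → ℕ
  | T.delta => 1
  | T.eps => 1
  | T.act _ => 1
  | T.alt x y => size x + size y + 1
  | T.seq x y => size x + size y + 1
  | T.par x y => size x + size y + 1
  | T.lm x y => size x + size y + 1
  | T.cm x y => size x + size y + 1
  | T.encap _ x => size x + 1

lemma size_pos : ∀ t : T A, 1 ≤ size t := by
  intro t; cases t <;> simp [size]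

lemma size_actd (a : Option A) : size (actd a) = 1 := by
  cases a <;> rfl

/-- Basic terms (normal forms). -/
inductive Basic {A : Type*} : T A → Prop
  | delta : Basic T.delta
  | eps : Basic T.eps
  | pre (a : Option A) {x : T A} : Basic x → Basic (T.seq (actd a) x)
  | alt {x y : T A} : Basic x → Basic y → Basic (T.alt x y)

lemma alt_delta_left (x : T A) : deriv γ (T.alt T.delta x) x :=
  .trans (A1 _ _) (A6 x)

lemma lm_delta (y : T A) : deriv γ (T.lm T.delta y) T.delta :=
  .trans (lm_congr (.symm (A7 T.eps)) (.refl y))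
    (.trans (CM3 (none : Option A) T.eps y) (A7 _))

/-- (a+b)+(c+d) = (a+c)+(b+d) -/
lemma add_swap (a b c d : T A) :
    deriv γ (T.alt (T.alt a b) (T.alt c d)) (T.alt (T.alt a c) (T.alt b d)) :=
  .trans (A2 a b (T.alt c d)) <|
    .trans (alt_congr (.refl a)
      (.trans (.symm (A2 b c d))
        (.trans (alt_congr (A1 b c) (.refl d)) (A2 c b d))))
      (.symm (A2 a c (T.alt b d)))

lemma seq_basic {x y : T A} (hx : Basic x) (hy : Basic y) :
    ∃ b, Basic b ∧ deriv γ (T.seq x y) b := by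
  induction hx with
  | delta => exact ⟨T.delta, .delta, A7 y⟩
  | eps => exact ⟨y, hy, A9 y⟩
  | pre a hx ih =>
    obtain ⟨b, hb, hd⟩ := ih
    exact ⟨T.seq (actd a) b, .pre a hb,
      .trans (A5 _ _ _) (seq_congr (.refl _) hd)⟩
  | alt hx1 hx2 ih1 ih2 =>
    obtain ⟨b1, hb1, hd1⟩ := ih1
    obtain ⟨b2, hb2, hd2⟩ := ih2
    exact ⟨T.alt b1 b2, .alt hb1 hb2, .trans (A4 _ _ _) (alt_congr hd1 hd2)⟩

lemma encap_basic (H : Set A) {x : T A} (hx : Basic x) :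
    ∃ b, Basic b ∧ deriv γ (T.encap H x) b := by
  induction hx with
  | delta => exact ⟨T.delta, .delta, Dδ H⟩
  | eps => exact ⟨T.eps, .eps, D0 H⟩
  | pre a hx ih =>
    obtain ⟨b, hb, hd⟩ := ih
    cases a with
    | none =>
      exact ⟨T.delta, .delta,
        .trans (D4 _ _ _) (.trans (seq_congr (Dδ H) (.refl _)) (A7 _))⟩
    | some a' =>
      by_cases h : a' ∈ H
      · exact ⟨T.delta, .delta,
          .trans (D4 _ _ _) (.trans (seq_congr (D2 h) (.refl _)) (A7 _))⟩
      · exact ⟨T.seq (actd (some a')) b, .pre (some a') hb,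
          .trans (D4 _ _ _) (seq_congr (D1 h) hd)⟩
  | alt hx1 hx2 ih1 ih2 =>
    obtain ⟨b1, hb1, hd1⟩ := ih1
    obtain ⟨b2, hb2, hd2⟩ := ih2
    exact ⟨T.alt b1 b2, .alt hb1 hb2, .trans (D3 _ _ _) (alt_congr hd1 hd2)⟩

lemma merge_basic : ∀ n : ℕ, ∀ x y : T A, Basic x → Basic y →
    size x + size y ≤ n →
    (∃ b, Basic b ∧ deriv γ (T.lm x y) b) ∧
    (∃ b, Basic b ∧ deriv γ (T.cm x y) b) ∧
    (∃ b, Basic b ∧ deriv γ (T.par x y) b) := by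
  intro n
  induction n with
  | zero =>
    intro x y _ _ hs
    have := size_pos x; have := size_pos y; omega
  | succ n ih =>
    have hlm : ∀ x y : T A, Basic x → Basic y → size x + size y ≤ n + 1 →
        ∃ b, Basic b ∧ deriv γ (T.lm x y) b := by
      intro x y hx hy hs
      cases hx with
      | delta => exact ⟨T.delta, .delta, lm_delta y⟩
      | eps => exact ⟨T.delta, .delta, CM2T y⟩
      | @pre a x' hx' =>
        have hs' : size x' + size y ≤ n := by
          simp only [size, size_actd] at hs; omega
        obtain ⟨b, hb, hd⟩ := (ih x' y hx' hy hs').2.2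
        exact ⟨T.seq (actd a) b, .pre a hb,
          .trans (CM3 a x' y) (seq_congr (.refl _) hd)⟩
      | @alt x1 x2 hx1 hx2 =>
        have h1 : size x1 + size y ≤ n := by
          have := size_pos x2; simp only [size] at hs; omega
        have h2 : size x2 + size y ≤ n := by
          have := size_pos x1; simp only [size] at hs; omega
        obtain ⟨b1, hb1, hd1⟩ := (ih x1 y hx1 hy h1).1
        obtain ⟨b2, hb2, hd2⟩ := (ih x2 y hx2 hy h2).1
        exact ⟨T.alt b1 b2, .alt hb1 hb2,
          .trans (CM4 _ _ _) (alt_congr hd1 hd2)⟩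
    have hcm : ∀ x y : T A, Basic x → Basic y → size x + size y ≤ n + 1 →
        ∃ b, Basic b ∧ deriv γ (T.cm x y) b := by
      intro x y hx hy hs
      cases hx with
      | delta => exact ⟨T.delta, .delta, CM11 y⟩
      | eps => exact ⟨T.delta, .delta, CM5T y⟩
      | @pre a x' hx' =>
        cases hy with
        | delta => exact ⟨T.delta, .delta, CM12 _⟩
        | eps => exact ⟨T.delta, .delta, CM6T _⟩
        | @pre b y' hy' =>
          have hs' : size x' + size y' ≤ n := by
            simp only [size, size_actd] at hs; omega
          obtain ⟨c, hc, hd⟩ := (ih x' y' hx' hy' hs').2.2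
          exact ⟨T.seq (actd (gammad γ a b)) c, .pre _ hc,
            .trans (CM7 a b x' y') (seq_congr (.refl _) hd)⟩
        | @alt y1 y2 hy1 hy2 =>
          have h1 : size (T.seq (actd a) x') + size y1 ≤ n := by
            have := size_pos y2; simp only [size] at hs ⊢; omega
          have h2 : size (T.seq (actd a) x') + size y2 ≤ n := by
            have := size_pos y1; simp only [size] at hs ⊢; omega
          obtain ⟨b1, hb1, hd1⟩ := (ih _ y1 (.pre a hx') hy1 h1).2.1
          obtain ⟨b2, hb2, hd2⟩ := (ih _ y2 (.pre a hx') hy2 h2).2.1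
          exact ⟨T.alt b1 b2, .alt hb1 hb2,
            .trans (CM9 _ _ _) (alt_congr hd1 hd2)⟩
      | @alt x1 x2 hx1 hx2 =>
        have h1 : size x1 + size y ≤ n := by
          have := size_pos x2; simp only [size] at hs; omega
        have h2 : size x2 + size y ≤ n := by
          have := size_pos x1; simp only [size] at hs; omega
        obtain ⟨b1, hb1, hd1⟩ := (ih x1 y hx1 hy h1).2.1
        obtain ⟨b2, hb2, hd2⟩ := (ih x2 y hx2 hy h2).2.1
        exact ⟨T.alt b1 b2, .alt hb1 hb2,
          .trans (CM8 _ _ _) (alt_congr hd1 hd2)⟩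
    intro x y hx hy hs
    refine ⟨hlm x y hx hy hs, hcm x y hx hy hs, ?_⟩
    obtain ⟨b1, hb1, hd1⟩ := hlm x y hx hy hs
    obtain ⟨b2, hb2, hd2⟩ := hlm y x hy hx (by omega)
    obtain ⟨b3, hb3, hd3⟩ := hcm x y hx hy hs
    obtain ⟨e1, he1, hde1⟩ := encap_basic (γ := γ) Set.univ hx
    obtain ⟨e2, he2, hde2⟩ := encap_basic (γ := γ) Set.univ hy
    obtain ⟨b4, hb4, hd4⟩ := seq_basic (γ := γ) he1 he2
    exact ⟨T.alt (T.alt (T.alt b1 b2) b3) b4,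
      .alt (.alt (.alt hb1 hb2) hb3) hb4,
      .trans (CM1T x y)
        (alt_congr (alt_congr (alt_congr hd1 hd2) hd3)
          (.trans (seq_congr hde1 hde2) hd4))⟩

lemma normalize : ∀ t : T A, ∃ b, Basic b ∧ deriv γ t b := by
  intro t
  induction t with
  | delta => exact ⟨T.delta, .delta, .refl _⟩
  | eps => exact ⟨T.eps, .eps, .refl _⟩
  | act a => exact ⟨T.seq (actd (some a)) T.eps, .pre (some a) .eps,
      .symm (A8 (T.act a))⟩
  | alt x y ihx ihy =>
    obtain ⟨b1, hb1, hd1⟩ := ihx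
    obtain ⟨b2, hb2, hd2⟩ := ihy
    exact ⟨T.alt b1 b2, .alt hb1 hb2, alt_congr hd1 hd2⟩
  | seq x y ihx ihy =>
    obtain ⟨b1, hb1, hd1⟩ := ihx
    obtain ⟨b2, hb2, hd2⟩ := ihy
    obtain ⟨b, hb, hd⟩ := seq_basic (γ := γ) hb1 hb2
    exact ⟨b, hb, .trans (seq_congr hd1 hd2) hd⟩
  | par x y ihx ihy =>
    obtain ⟨b1, hb1, hd1⟩ := ihx
    obtain ⟨b2, hb2, hd2⟩ := ihy
    obtain ⟨b, hb, hd⟩ :=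
      (merge_basic (size b1 + size b2) b1 b2 hb1 hb2 le_rfl).2.2
    exact ⟨b, hb, .trans (par_congr hd1 hd2) hd⟩
  | lm x y ihx ihy =>
    obtain ⟨b1, hb1, hd1⟩ := ihx
    obtain ⟨b2, hb2, hd2⟩ := ihy
    obtain ⟨b, hb, hd⟩ :=
      (merge_basic (size b1 + size b2) b1 b2 hb1 hb2 le_rfl).1
    exact ⟨b, hb, .trans (lm_congr hd1 hd2) hd⟩
  | cm x y ihx ihy =>
    obtain ⟨b1, hb1, hd1⟩ := ihx
    obtain ⟨b2, hb2, hd2⟩ := ihy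
    obtain ⟨b, hb, hd⟩ :=
      (merge_basic (size b1 + size b2) b1 b2 hb1 hb2 le_rfl).2.1
    exact ⟨b, hb, .trans (cm_congr hd1 hd2) hd⟩
  | encap H x ihx =>
    obtain ⟨b1, hb1, hd1⟩ := ihx
    obtain ⟨b, hb, hd⟩ := encap_basic (γ := γ) H hb1
    exact ⟨b, hb, .trans (encap_congr H hd1) hd⟩

/-- key lemma: for basic b, b⌊ε + ∂_A(b) = b. -/
lemma key {b : T A} (hb : Basic b) :
    deriv γ (T.alt (T.lm b T.eps) (T.encap Set.univ b)) b := by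
  induction hb with
  | delta => exact .trans (alt_congr (lm_delta _) (Dδ _)) (A3 _)
  | eps => exact .trans (alt_congr (CM2T _) (D0 _)) (alt_delta_left _)
  | @pre a x hx ih =>
    -- first: x ∥ ε = x
    have hpe : deriv γ (T.par x T.eps) x :=
      .trans (CM1T x T.eps) <|
        .trans (alt_congr
          (alt_congr (alt_congr (.refl _) (CM2T x)) (CM6T x))
          (.trans (seq_congr (.refl _) (D0 _)) (A8 _))) <|
        .trans (alt_congr (.trans (A6 _) (A6 _)) (.refl _)) ih
    have h1 : deriv γ (T.lm (T.seq (actd a) x) T.eps) (T.seq (actd a) x) :=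
      .trans (CM3 a x T.eps) (seq_congr (.refl _) hpe)
    have hd : deriv γ (T.encap Set.univ (actd a)) T.delta := by
      cases a with
      | none => exact Dδ _
      | some a' => exact D2 (Set.mem_univ a')
    have h2 : deriv γ (T.encap Set.univ (T.seq (actd a) x)) T.delta :=
      .trans (D4 _ _ _) (.trans (seq_congr hd (.refl _)) (A7 _))
    exact .trans (alt_congr h1 h2) (A6 _)
  | @alt x y hx hy ihx ihy =>
    exact .trans (alt_congr (CM4 _ _ _) (D3 _ _ _)) <|
      .trans (add_swap _ _ _ _) (alt_congr ihx ihy)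

end ACPaux

/-- In ACPε, for every closed term `t`, the equation `ε ∥ t = t` is derivable
from the axioms: `ε` is a unit for parallel composition. -/
theorem eps_par_unit {A : Type*} (γ : A → A → Option A)
    (hcomm : ∀ a b, γ a b = γ b a)
    (hassoc : ∀ a b c : A,
      gammad γ (γ a b) (some c) = gammad γ (some a) (γ b c))
    (t : T A) : deriv γ (par eps t) t := by
  open ACPaux T.deriv in
  obtain ⟨b, hb, hd⟩ := normalize (γ := γ) t
  have hk := key (γ := γ) hb
  exact .trans (par_congr (.refl eps) hd) <|
    .trans (CM1T eps b) <|
    .trans (alt_congr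
      (alt_congr (alt_congr (CM2T b) (.refl _)) (CM5T b))
      (.trans (seq_congr (D0 _) (.refl _)) (A9 _))) <|
    .trans (alt_congr (.trans (A6 _) (alt_delta_left _)) (.refl _)) <|
    .trans hk (.symm hd)
end
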